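/- arXiv:2109.13413 — 7 statements merged into one kernel-verified Lean document; each statement's English description precedes it below -/
import Mathlib

section
/- Let n > 3 be a prime. The number of orbits of PGL_2(F_{2^n}) acting by Möbius transformations on the set S of elements of F_{2^{6n}} of degree 6 over F_{2^n} is 2^{3n} + 2^n - 1. -/
local notation "K" => AlgebraicClosure (ZMod 2)

/-!
Write `q = p ^ n`. An element `α` of degree 6 over `𝔽_q` has three distinct Frobenius conjugates
`α, α ^ q, α ^ q²`, so no nonzero polynomial of degree at most 2 over `𝔽_q` vanishes at `α`. The
fixed-point equation `c α² + (d - a) α - b = 0` of a Möbius transformation is such a polynomial,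
and it vanishes only for scalar matrices: `PGL₂(𝔽_q)` acts freely on these elements, viewed in
`ℙ¹ = OnePoint`. They form an invariant set because Frobenius commutes with Möbius
transformations with coefficients in `𝔽_q`. By inclusion–exclusion over
`𝔽_{q²} ∩ 𝔽_{q³} = 𝔽_q` there are `q⁶ - q³ - q² + q` of them, and `|PGL₂(𝔽_q)| = q³ - q`, so
there are `q³ + q - 1` orbits.
-/

open Matrix MatrixGroups Polynomial MulAction
open scoped OnePoint

theorem MulAction.card_eq_card_mul_card_of_stabilizer_eq_bot {G X Y : Type*} [Group G]
    [MulAction G X] (hfree : ∀ x : X, stabilizer G x = ⊥) (π : X → Y)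
    (hπ : Function.Surjective π) (hfib : ∀ x y, π x = π y ↔ x ∈ orbit G y) :
    Nat.card X = Nat.card Y * Nat.card G := by
  have hquot : orbitRel.Quotient G X ≃ Y :=
    (Quotient.congrRight fun x y => orbitRel_apply.trans (hfib x y).symm).trans
      (Setoid.quotientKerEquivOfSurjective π hπ)
  rw [Nat.card_congr (selfEquivOrbitsQuotientProd hfree), Nat.card_prod, Nat.card_congr hquot]

lemma OnePoint.coe_preimage_orbit_eq_iff {G X : Type*} [Group G] [MulAction G (OnePoint X)]
    {x y : OnePoint X} (hx : x ≠ ∞) :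
    (↑) ⁻¹' orbit G x = ((↑) : X → OnePoint X) ⁻¹' orbit G y ↔ x ∈ orbit G y := by
  refine ⟨fun h => ?_, fun h => by rw [orbit_eq_iff.mpr h]⟩
  obtain ⟨α, rfl⟩ := ne_infty_iff_exists.mp hx
  exact (Set.ext_iff.mp h α).mp (mem_orbit_self _)

theorem Matrix.ProjGenLinGroup.card_mul_card_sub_one {ι 𝔽 : Type*} [Fintype ι] [DecidableEq ι]
    [Nonempty ι] [Field 𝔽] : Nat.card PGL(ι, 𝔽) * (Nat.card 𝔽 - 1) = Nat.card (GL ι 𝔽) := by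
  have hinj : Function.Injective (GeneralLinearGroup.scalar ι (R := 𝔽)) := by
    intro u v huv
    obtain ⟨i⟩ := ‹Nonempty ι›
    ext
    simpa using congrArg (fun g : GL ι 𝔽 => g i i) huv
  have hcenter : Nat.card (Subgroup.center (GL ι 𝔽)) = Nat.card 𝔽 - 1 := by
    rw [GeneralLinearGroup.center_eq_range_scalar,
      ← Nat.card_congr (MonoidHom.ofInjective hinj).toEquiv, Nat.card_units]
  rw [Subgroup.card_eq_card_quotient_mul_card_subgroup (Subgroup.center (GL ι 𝔽)), hcenter]
  rfl

theorem Matrix.ProjGenLinGroup.card_fin_two {𝔽 : Type*} [Field 𝔽] [Finite 𝔽] :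
    Nat.card PGL(2, 𝔽) = Nat.card 𝔽 * (Nat.card 𝔽 ^ 2 - 1) := by
  have := Fintype.ofFinite 𝔽
  have hq : 1 < Nat.card 𝔽 := Finite.one_lt_card
  have h := card_mul_card_sub_one (ι := Fin 2) (𝔽 := 𝔽)
  rw [card_GL_field, Fin.prod_univ_two, ← Nat.card_eq_fintype_card] at h
  simp only [Fin.val_zero, Fin.val_one, pow_zero, pow_one] at h
  apply Nat.eq_of_mul_eq_mul_right (Nat.sub_pos_of_lt hq)
  rw [h, sq, ← Nat.mul_sub_one]
  ring

lemma OnePoint.scalar_smul {L : Type*} [Field L] [DecidableEq L] (u : Lˣ) (x : OnePoint L) :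
    GeneralLinearGroup.scalar (Fin 2) u • x = x := by
  cases x with
  | infty => simp [smul_infty_eq_ite]
  | coe x => simp [smul_some_eq_ite]

lemma eq_zero_of_natDegree_le_two_of_aeval_eq_zero {L : Type*} [Field L] {F : Subfield L}
    {σ : L →+* L} (hσ : ∀ x ∈ F, σ x = x) {α : L} (hα : σ (σ α) ≠ α) {P : F[X]}
    (hdeg : P.natDegree ≤ 2) (hP : aeval α P = 0) : P = 0 := by
  classical
  set Q := P.map (algebraMap F L)
  have hQ : Q.map σ = Q := by
    rw [Polynomial.map_map]
    congr 1
    ext x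
    exact hσ x x.2
  have hroot : ∀ x, Q.eval x = 0 → Q.eval (σ x) = 0 := fun x hx => by
    rw [← hQ, eval_map_apply, hx, map_zero]
  have h01 : α ≠ σ α := fun h => hα (by rw [← h, ← h])
  have h12 : σ α ≠ σ (σ α) := fun h => h01 (σ.injective h)
  have hQα : Q.eval α = 0 := by rwa [aeval_def, eval₂_eq_eval_map] at hP
  have hQ0 : Q = 0 := by
    refine Q.eq_zero_of_natDegree_lt_card_of_eval_eq_zero' {α, σ α, σ (σ α)} ?_ ?_
    · simp only [Finset.mem_insert, Finset.mem_singleton]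
      rintro x (rfl | rfl | rfl)
      exacts [hQα, hroot _ hQα, hroot _ (hroot _ hQα)]
    · rw [Finset.card_eq_three.mpr ⟨_, _, _, h01, hα.symm, h12, rfl⟩, natDegree_map]
      omega
  exact (Polynomial.map_eq_zero_iff (algebraMap F L).injective).mp hQ0

namespace Matrix.ProjGenLinGroup

variable {L : Type*} [Field L] [DecidableEq L] {F : Subfield L}

instance : MulAction PGL(2, F) (OnePoint L) :=
  letI : MulAction (GL (Fin 2) F) (OnePoint L) := .compHom _ (GeneralLinearGroup.map F.subtype)
  mulActionOfGL (n := Fin 2) fun u x => by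
    change GeneralLinearGroup.map (n := Fin 2) F.subtype _ • x = x
    rw [GeneralLinearGroup.map_scalar]
    exact OnePoint.scalar_smul _ _

lemma mk_smul_onePoint (g : GL (Fin 2) F) (x : OnePoint L) :
    (mk g : PGL(2, F)) • x = GeneralLinearGroup.map F.subtype g • x :=
  rfl

lemma mk_smul_coe_of_notMem {α : L} (hα : α ∉ F) (g : GL (Fin 2) F) :
    (mk g : PGL(2, F)) • (α : OnePoint L) =
      ↑(((g 0 0 : L) * α + g 0 1) / ((g 1 0 : L) * α + g 1 1)) := by
  have hden : (g 1 0 : L) * α + g 1 1 ≠ 0 := by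
    intro h
    by_cases hc : g 1 0 = 0
    · have hd : g 1 1 = 0 := by simpa [hc] using h
      exact g.det_ne_zero (by simp [det_fin_two, hc, hd])
    · apply hα
      have hc' : (g 1 0 : L) ≠ 0 := by exact_mod_cast hc
      have : α = -(g 1 1 : L) / g 1 0 := by
        rw [eq_div_iff hc']
        linear_combination h
      rw [this]
      exact div_mem (neg_mem (g 1 1).2) (g 1 0).2
  rw [mk_smul_onePoint, OnePoint.smul_some_eq_ite]
  simp only [GeneralLinearGroup.map_apply, Subfield.subtype_apply]
  rw [if_neg hden]

lemma onePoint_map_smul {σ : L →+* L} (hσ : ∀ x ∈ F, σ x = x) (g : PGL(2, F))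
    (x : OnePoint L) : (g • x).map σ = g • x.map σ := by
  induction g using ProjGenLinGroup.induction_on with | mk g =>
  have hg : GeneralLinearGroup.map σ (GeneralLinearGroup.map F.subtype g) =
      GeneralLinearGroup.map F.subtype g := by
    ext i j
    simp [GeneralLinearGroup.map_apply, hσ _ (g i j).2]
  rw [mk_smul_onePoint, mk_smul_onePoint, OnePoint.map_smul, hg]

lemma stabilizer_coe_eq_bot {α : L}
    (hα : ∀ P : F[X], P.natDegree ≤ 2 → aeval α P = 0 → P = 0) :
    stabilizer PGL(2, F) (α : OnePoint L) = ⊥ := by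
  refine (Subgroup.eq_bot_iff_forall _).mpr fun g hg => ?_
  induction g using ProjGenLinGroup.induction_on with | mk g =>
  rw [mem_stabilizer_iff, mk_smul_onePoint,
    ← GeneralLinearGroup.fixpointPolynomial_aeval_eq_zero_iff] at hg
  have hfix : g.fixpointPolynomial = 0 := by
    refine hα _ ?_ ?_
    · unfold GeneralLinearGroup.fixpointPolynomial
      compute_degree
    · simpa [GeneralLinearGroup.fixpointPolynomial, GeneralLinearGroup.map_apply,
        Algebra.algebraMap_ofSubsemiring_apply] using hg
  rw [mk_eq_one, GeneralLinearGroup.mem_center_iff_val_mem_range_scalar]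
  exact GeneralLinearGroup.fixpointPolynomial_eq_zero_iff.mp hfix

lemma coe_preimage_orbit_coe {α : L} (hα : α ∉ F) :
    ((↑) : L → OnePoint L) ⁻¹' orbit PGL(2, F) (α : OnePoint L) =
      {β | ∃ a b c d : L, a ∈ F ∧ b ∈ F ∧ c ∈ F ∧ d ∈ F ∧ a * d - b * c ≠ 0 ∧
        β = (a * α + b) / (c * α + d)} := by
  ext β
  simp only [Set.mem_preimage, mem_orbit_iff, Set.mem_ofPred_eq]
  constructor
  · rintro ⟨g, hg⟩
    induction g using ProjGenLinGroup.induction_on with | mk g =>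
    rw [mk_smul_coe_of_notMem hα, OnePoint.coe_eq_coe] at hg
    refine ⟨g 0 0, g 0 1, g 1 0, g 1 1, (g 0 0).2, (g 0 1).2, (g 1 0).2, (g 1 1).2, ?_, hg.symm⟩
    have hdet := g.det_ne_zero
    rw [det_fin_two] at hdet
    exact_mod_cast hdet
  · rintro ⟨a, b, c, d, ha, hb, hc, hd, hdet, rfl⟩
    let M : Matrix (Fin 2) (Fin 2) F := !![⟨a, ha⟩, ⟨b, hb⟩; ⟨c, hc⟩, ⟨d, hd⟩]
    have hM : M.det ≠ 0 := by
      rw [det_fin_two_of]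
      intro h
      exact hdet (by simpa using congrArg ((↑) : F → L) h)
    refine ⟨mk (GeneralLinearGroup.mkOfDetNeZero M hM), ?_⟩
    rw [mk_smul_coe_of_notMem hα]
    rfl

end Matrix.ProjGenLinGroup

open Matrix.ProjGenLinGroup

section GaloisSubfield

variable (p : ℕ) [Fact p.Prime] (L : Type*) [Field L] [CharP L p]

def galoisSubfield (m : ℕ) : Subfield L := (iterateFrobenius L p m).eqLocusField (RingHom.id L)

variable {p L}

lemma mem_galoisSubfield {m : ℕ} {x : L} : x ∈ galoisSubfield p L m ↔ x ^ p ^ m = x := by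
  rw [galoisSubfield, RingHom.mem_eqLocusField, iterateFrobenius_def]
  rfl

lemma mem_galoisSubfield_iff_isPeriodicPt {m : ℕ} {x : L} :
    x ∈ galoisSubfield p L m ↔ Function.IsPeriodicPt (frobenius L p) m x := by
  rw [mem_galoisSubfield, Function.IsPeriodicPt, Function.IsFixedPt, iterate_frobenius]

lemma galoisSubfield_le_of_dvd {a b : ℕ} (h : a ∣ b) :
    galoisSubfield p L a ≤ galoisSubfield p L b := fun x hx => by
  rw [mem_galoisSubfield_iff_isPeriodicPt] at hx ⊢
  exact hx.trans_dvd h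

lemma galoisSubfield_inf (a b : ℕ) :
    galoisSubfield p L a ⊓ galoisSubfield p L b = galoisSubfield p L (a.gcd b) := by
  refine le_antisymm (fun x hx => ?_)
    (le_inf (galoisSubfield_le_of_dvd (Nat.gcd_dvd_left a b))
      (galoisSubfield_le_of_dvd (Nat.gcd_dvd_right a b)))
  rw [Subfield.mem_inf, mem_galoisSubfield_iff_isPeriodicPt,
    mem_galoisSubfield_iff_isPeriodicPt] at hx
  exact mem_galoisSubfield_iff_isPeriodicPt.mpr (hx.1.gcd hx.2)

variable [IsAlgClosed L]

lemma card_galoisSubfield {m : ℕ} (hm : m ≠ 0) : Nat.card (galoisSubfield p L m) = p ^ m := by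
  have hp := (Fact.out : p.Prime).one_lt
  have hset : (galoisSubfield p L m : Set L) = (X ^ p ^ m - X : L[X]).rootSet L := by
    ext x
    rw [SetLike.mem_coe, mem_galoisSubfield, mem_rootSet, ← sub_eq_zero]
    simp [FiniteField.X_pow_card_pow_sub_X_ne_zero L hm hp]
  rw [← SetLike.coe_sort_coe, hset, Nat.card_eq_fintype_card,
    card_rootSet_eq_natDegree (galois_poly_separable p _ (dvd_pow_self p hm))
      (IsAlgClosed.splits _), FiniteField.X_pow_card_pow_sub_X_natDegree_eq _ hm hp]

lemma ncard_galoisSubfield {m : ℕ} (hm : m ≠ 0) :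
    (galoisSubfield p L m : Set L).ncard = p ^ m := by
  rw [← Nat.card_coe_set_eq, SetLike.coe_sort_coe, card_galoisSubfield hm]

lemma finite_galoisSubfield {m : ℕ} (hm : m ≠ 0) : (galoisSubfield p L m : Set L).Finite :=
  Set.finite_of_ncard_ne_zero (by simp [ncard_galoisSubfield hm, (Fact.out : p.Prime).ne_zero])

end GaloisSubfield

section SexticPoints

variable {p : ℕ} [Fact p.Prime] {L : Type*} [Field L] [CharP L p] [DecidableEq L] {n : ℕ}

lemma map_iterateFrobenius_smul (k : ℕ) (g : PGL(2, galoisSubfield p L n)) (x : OnePoint L) :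
    (g • x).map (iterateFrobenius L p (k * n)) = g • x.map (iterateFrobenius L p (k * n)) :=
  onePoint_map_smul (fun _ hy => galoisSubfield_le_of_dvd (dvd_mul_left n k) hy) g x

variable (p L n) in
/-- The points of degree 6 over `galoisSubfield p L n`, phrased through Frobenius on `ℙ¹` so
that invariance under `PGL₂` is the equivariance of Frobenius. -/
def sexticPoints : SubMulAction PGL(2, galoisSubfield p L n) (OnePoint L) where
  carrier := {x | x.map (iterateFrobenius L p (6 * n)) = x ∧
    x.map (iterateFrobenius L p (2 * n)) ≠ x ∧ x.map (iterateFrobenius L p (3 * n)) ≠ x}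
  smul_mem' g x hx := by
    simpa only [Set.mem_ofPred_eq, ne_eq, map_iterateFrobenius_smul, smul_left_cancel_iff]
      using hx

lemma mem_sexticPoints {x : OnePoint L} : x ∈ sexticPoints p L n ↔
    x.map (iterateFrobenius L p (6 * n)) = x ∧ x.map (iterateFrobenius L p (2 * n)) ≠ x ∧
      x.map (iterateFrobenius L p (3 * n)) ≠ x :=
  Iff.rfl

lemma coe_mem_sexticPoints {α : L} : (α : OnePoint L) ∈ sexticPoints p L n ↔
    α ^ p ^ (6 * n) = α ∧ α ^ p ^ (2 * n) ≠ α ∧ α ^ p ^ (3 * n) ≠ α := by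
  simp only [mem_sexticPoints, OnePoint.map_some, ne_eq, OnePoint.coe_eq_coe,
    iterateFrobenius_def]

lemma infty_notMem_sexticPoints : ∞ ∉ sexticPoints p L n := fun h => h.2.1 rfl

lemma exists_coe_eq_of_mem_sexticPoints {x : OnePoint L} (hx : x ∈ sexticPoints p L n) :
    ∃ α : L, (α : OnePoint L) = x :=
  OnePoint.ne_infty_iff_exists.mp (ne_of_mem_of_not_mem hx infty_notMem_sexticPoints)

lemma iterateFrobenius_apply_apply_ne {α : L} (hα : (α : OnePoint L) ∈ sexticPoints p L n) :
    iterateFrobenius L p n (iterateFrobenius L p n α) ≠ α := by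
  rw [iterateFrobenius_def, iterateFrobenius_def, ← pow_mul, ← pow_add, ← two_mul]
  exact (coe_mem_sexticPoints.mp hα).2.1

lemma notMem_galoisSubfield_of_mem_sexticPoints {α : L}
    (hα : (α : OnePoint L) ∈ sexticPoints p L n) : α ∉ galoisSubfield p L n := fun h => by
  have h' : iterateFrobenius L p n α = α := h
  exact iterateFrobenius_apply_apply_ne hα (by rw [h', h'])

lemma stabilizer_eq_bot_of_mem_sexticPoints (x : sexticPoints p L n) :
    stabilizer PGL(2, galoisSubfield p L n) x = ⊥ := by
  obtain ⟨α, hα⟩ := exists_coe_eq_of_mem_sexticPoints x.2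
  rw [SubMulAction.stabilizer_of_subMul, ← hα]
  exact stabilizer_coe_eq_bot fun P hdeg hP => eq_zero_of_natDegree_le_two_of_aeval_eq_zero
    (fun _ hy => hy) (iterateFrobenius_apply_apply_ne (hα ▸ x.2)) hdeg hP

lemma coe_preimage_orbit_of_mem_sexticPoints {α : L}
    (hα : (α : OnePoint L) ∈ sexticPoints p L n) :
    (↑) ⁻¹' orbit PGL(2, galoisSubfield p L n) (α : OnePoint L) = {β : L | ∃ a b c d : L,
      a ^ (p ^ n) = a ∧ b ^ (p ^ n) = b ∧ c ^ (p ^ n) = c ∧ d ^ (p ^ n) = d ∧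
      a * d - b * c ≠ 0 ∧ β = (a * α + b) / (c * α + d)} := by
  rw [coe_preimage_orbit_coe (notMem_galoisSubfield_of_mem_sexticPoints hα)]
  simp only [mem_galoisSubfield]

lemma card_sexticPoints_eq_mul : Nat.card (sexticPoints p L n) =
    Nat.card {O : Set L // ∃ α : L,
        (α ^ (p ^ (6 * n)) = α ∧ α ^ (p ^ (2 * n)) ≠ α ∧ α ^ (p ^ (3 * n)) ≠ α) ∧
        O = {β : L | ∃ a b c d : L,
          a ^ (p ^ n) = a ∧ b ^ (p ^ n) = b ∧ c ^ (p ^ n) = c ∧ d ^ (p ^ n) = d ∧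
          a * d - b * c ≠ 0 ∧ β = (a * α + b) / (c * α + d)}} *
      Nat.card PGL(2, galoisSubfield p L n) := by
  refine card_eq_card_mul_card_of_stabilizer_eq_bot stabilizer_eq_bot_of_mem_sexticPoints
    (fun x => ⟨(↑) ⁻¹' orbit PGL(2, galoisSubfield p L n) (x : OnePoint L), ?_⟩) ?_
    fun x y => ?_
  · obtain ⟨α, hα⟩ := exists_coe_eq_of_mem_sexticPoints x.2
    exact ⟨α, coe_mem_sexticPoints.mp (hα ▸ x.2),
      by rw [← hα, coe_preimage_orbit_of_mem_sexticPoints (hα ▸ x.2)]⟩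
  · rintro ⟨O, α, hα, rfl⟩
    exact ⟨⟨α, coe_mem_sexticPoints.mpr hα⟩,
      Subtype.ext (coe_preimage_orbit_of_mem_sexticPoints (coe_mem_sexticPoints.mpr hα))⟩
  · rw [Subtype.mk.injEq, SubMulAction.mem_orbit_subMul_iff]
    exact OnePoint.coe_preimage_orbit_eq_iff (ne_of_mem_of_not_mem x.2 infty_notMem_sexticPoints)

lemma card_sexticPoints [IsAlgClosed L] (hn : n ≠ 0) :
    Nat.card (sexticPoints p L n) + p ^ (3 * n) + p ^ (2 * n) = p ^ (6 * n) + p ^ n := by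
  set G : ℕ → Set L := fun m => galoisSubfield p L m
  have hpoints : (sexticPoints p L n : Set (OnePoint L)) =
      (↑) '' (G (6 * n) \ (G (2 * n) ∪ G (3 * n))) := by
    ext x
    cases x with
    | infty => simpa using infty_notMem_sexticPoints
    | coe α =>
      simp [OnePoint.coe_injective.mem_set_image, coe_mem_sexticPoints, G, mem_galoisSubfield]
  have hsub : G (2 * n) ∪ G (3 * n) ⊆ G (6 * n) :=
    Set.union_subset (galoisSubfield_le_of_dvd ⟨3, by ring⟩) (galoisSubfield_le_of_dvd ⟨2, by ring⟩)
  have hinter : G (2 * n) ∩ G (3 * n) = G n := by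
    have h := congrArg SetLike.coe (galoisSubfield_inf (p := p) (L := L) (2 * n) (3 * n))
    rwa [Nat.gcd_mul_right, show Nat.gcd 2 3 = 1 by norm_num, one_mul] at h
  have hcard : ∀ k ≠ 0, (G (k * n)).ncard = p ^ (k * n) := fun k hk =>
    ncard_galoisSubfield (Nat.mul_ne_zero hk hn)
  have hfin : ∀ k ≠ 0, (G (k * n)).Finite := fun k hk =>
    finite_galoisSubfield (Nat.mul_ne_zero hk hn)
  have hdiff := Set.ncard_sdiff_add_ncard_of_subset hsub (hfin 6 (by norm_num))
  have hunion := Set.ncard_union_add_ncard_inter _ _ (hfin 2 (by norm_num)) (hfin 3 (by norm_num))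
  rw [hinter, ncard_galoisSubfield hn, hcard 2 (by norm_num), hcard 3 (by norm_num)] at hunion
  rw [hcard 6 (by norm_num)] at hdiff
  rw [← SetLike.coe_sort_coe, hpoints, Nat.card_coe_set_eq,
    Set.ncard_image_of_injective _ OnePoint.coe_injective]
  omega

end SexticPoints

theorem card_moebius_orbits_of_degree_six {p : ℕ} [Fact p.Prime] {L : Type*} [Field L]
    [CharP L p] [IsAlgClosed L] {n : ℕ} (hn : n ≠ 0) :
    Nat.card {O : Set L // ∃ α : L,
        (α ^ (p ^ (6 * n)) = α ∧ α ^ (p ^ (2 * n)) ≠ α ∧ α ^ (p ^ (3 * n)) ≠ α) ∧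
        O = {β : L | ∃ a b c d : L,
          a ^ (p ^ n) = a ∧ b ^ (p ^ n) = b ∧ c ^ (p ^ n) = c ∧ d ^ (p ^ n) = d ∧
          a * d - b * c ≠ 0 ∧ β = (a * α + b) / (c * α + d)}}
      = p ^ (3 * n) + p ^ n - 1 := by
  classical
  have : Finite (galoisSubfield p L n) :=
    Nat.finite_of_card_ne_zero (by simp [card_galoisSubfield hn, (Fact.out : p.Prime).ne_zero])
  have hcount := card_sexticPoints (p := p) (L := L) hn
  rw [card_sexticPoints_eq_mul, card_fin_two, card_galoisSubfield hn] at hcount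
  have hq : 2 ≤ p ^ n := (Fact.out : p.Prime).two_le.trans (Nat.le_self_pow hn p)
  simp only [mul_comm _ n, pow_mul] at hcount ⊢
  generalize p ^ n = q at hcount hq ⊢
  have h1 : 1 < q ^ 2 := by nlinarith
  have h2 : 1 ≤ q ^ 3 + q := by nlinarith
  refine Nat.eq_of_mul_eq_mul_right
    (show 0 < q * (q ^ 2 - 1) from Nat.mul_pos (by omega) (Nat.sub_pos_of_lt h1)) ?_
  zify [h1.le, h2] at hcount ⊢
  linear_combination hcount

theorem stmt_4_general (n : ℕ) (hn : n.Prime) :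
    Nat.card {O : Set K // ∃ α : K,
        (α ^ (2 ^ (6 * n)) = α ∧ α ^ (2 ^ (2 * n)) ≠ α ∧ α ^ (2 ^ (3 * n)) ≠ α) ∧
        O = {β : K | ∃ a b c d : K,
          a ^ (2 ^ n) = a ∧ b ^ (2 ^ n) = b ∧ c ^ (2 ^ n) = c ∧ d ^ (2 ^ n) = d ∧
          a * d - b * c ≠ 0 ∧ β = (a * α + b) / (c * α + d)}}
      = 2 ^ (3 * n) + 2 ^ n - 1 :=
  card_moebius_orbits_of_degree_six (p := 2) hn.ne_zero

/-- The number of orbits of `PGL₂(F_{2^n})` acting by Möbius transformations on the set of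
elements of degree 6 over `F_{2^n}` is `2^{3n} + 2^n - 1`. -/
theorem stmt_4 (n : ℕ) (hn : n.Prime) (hn3 : 3 < n) :
    Nat.card {O : Set K // ∃ α : K,
        (α ^ (2 ^ (6 * n)) = α ∧ α ^ (2 ^ (2 * n)) ≠ α ∧ α ^ (2 ^ (3 * n)) ≠ α) ∧
        O = {β : K | ∃ a b c d : K,
          a ^ (2 ^ n) = a ∧ b ^ (2 ^ n) = b ∧ c ^ (2 ^ n) = c ∧ d ^ (2 ^ n) = d ∧
          a * d - b * c ≠ 0 ∧ β = (a * α + b) / (c * α + d)}}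
      = 2 ^ (3 * n) + 2 ^ n - 1 :=
  stmt_4_general n hn
end

section
/- Let n > 3 be prime. The number of roots of x^{2^{3n}} + x + 1 = 0 lying in the set S of elements of F_{2^{6n}} of degree 6 over F_{2^n} is 2^{3n} - 2^n. -/
/-!
In characteristic 2, `x ^ 2 ^ n = x + 1` propagates along the Frobenius to
`x ^ 2 ^ (k * n) = x + k`. Hence a root of `X ^ 2 ^ (3 * n) + X + 1` is fixed by
`x ↦ x ^ 2 ^ (6 * n)`, never by `x ↦ x ^ 2 ^ (3 * n)`, and is fixed by `x ↦ x ^ 2 ^ (2 * n)`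
exactly when it is a root of `X ^ 2 ^ n + X + 1`, all of whose roots are roots of the first
polynomial. Both polynomials have derivative 1, so they are separable and have `2 ^ (3 * n)` and
`2 ^ n` roots in an algebraically closed field.
-/

local notation "K" => AlgebraicClosure (ZMod 2)

open Polynomial

theorem natDegree_X_pow_two_pow_add_X_add_one {R : Type*} [Semiring R] [Nontrivial R] {m : ℕ}
    (hm : m ≠ 0) : (X ^ 2 ^ m + X + 1 : R[X]).natDegree = 2 ^ m := by
  have : 1 < 2 ^ m := Nat.one_lt_two_pow hm
  compute_degree!
  · simp [this.ne]
  · omega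

section CharTwo

variable {R : Type*} [CommRing R] [CharP R 2]

theorem pow_two_pow_mul_eq_add_natCast {x : R} {n : ℕ} (h : x ^ 2 ^ n = x + 1) (k : ℕ) :
    x ^ 2 ^ (k * n) = x + k := by
  induction k with
  | zero => simp
  | succ k ih =>
    have hk : (k : R) ^ 2 ^ n = k := map_natCast (iterateFrobenius R 2 n) k
    rw [add_mul, one_mul, pow_add, pow_mul, ih, add_pow_char_pow, h, hk]
    push_cast
    ring

theorem separable_X_pow_two_pow_add_X_add_one {m : ℕ} (hm : m ≠ 0) :
    (X ^ 2 ^ m + X + 1 : R[X]).Separable := by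
  have hderiv : derivative (X ^ 2 ^ m + X + 1 : R[X]) = 1 := by
    simp [derivative_X_pow, CharTwo.two_eq_zero, hm]
  rw [Separable, hderiv]
  exact isCoprime_one_right

theorem pow_two_pow_mul_eq_self_of_even {x : R} {n : ℕ} (h : x ^ 2 ^ n = x + 1) {k : ℕ}
    (hk : Even k) : x ^ 2 ^ (k * n) = x := by
  rw [pow_two_pow_mul_eq_add_natCast h, (CharP.cast_eq_zero_iff R 2 k).2 hk.two_dvd, add_zero]

theorem pow_two_pow_mul_eq_add_one_of_odd {x : R} {n : ℕ} (h : x ^ 2 ^ n = x + 1) {k : ℕ}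
    (hk : Odd k) : x ^ 2 ^ (k * n) = x + 1 := by
  obtain ⟨j, rfl⟩ := hk
  rw [pow_two_pow_mul_eq_add_natCast h, Nat.cast_add_one,
    (CharP.cast_eq_zero_iff R 2 _).2 (dvd_mul_right 2 j), zero_add]

theorem setOf_pow_two_pow_add_add_one_subset {k : ℕ} (hk : Odd k) (n : ℕ) :
    {x : R | x ^ 2 ^ n + x + 1 = 0} ⊆ {x : R | x ^ 2 ^ (k * n) + x + 1 = 0} := by
  intro x hx
  simp only [Set.mem_ofPred_eq, add_assoc, CharTwo.add_eq_zero] at hx ⊢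
  exact pow_two_pow_mul_eq_add_one_of_odd hx hk

theorem setOf_pow_two_pow_three_mul_eq_sdiff [Nontrivial R] (n : ℕ) :
    {x : R | x ^ 2 ^ (3 * n) + x + 1 = 0 ∧
        x ^ 2 ^ (6 * n) = x ∧ x ^ 2 ^ (2 * n) ≠ x ∧ x ^ 2 ^ (3 * n) ≠ x}
      = {x : R | x ^ 2 ^ (3 * n) + x + 1 = 0} \ {x : R | x ^ 2 ^ n + x + 1 = 0} := by
  ext x
  simp only [Set.mem_ofPred_eq, Set.mem_sdiff, add_assoc, CharTwo.add_eq_zero]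
  constructor
  · rintro ⟨h3, -, h2, -⟩
    exact ⟨h3, fun h1 => h2 (pow_two_pow_mul_eq_self_of_even h1 even_two)⟩
  · rintro ⟨h3, h1⟩
    refine ⟨h3, ?_, fun h2 => h1 ?_, by simp [h3]⟩
    · rw [show 6 * n = 2 * (3 * n) by ring]
      exact pow_two_pow_mul_eq_self_of_even h3 even_two
    · rwa [show 3 * n = 2 * n + n by ring, pow_add, pow_mul, h2] at h3

end CharTwo

theorem ncard_setOf_pow_two_pow_add_add_one_eq_zero {F : Type*} [Field F] [IsAlgClosed F]
    [CharP F 2] {m : ℕ} (hm : m ≠ 0) : {x : F | x ^ 2 ^ m + x + 1 = 0}.ncard = 2 ^ m := by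
  have hsep := separable_X_pow_two_pow_add_X_add_one (R := F) hm
  have hroots : {x : F | x ^ 2 ^ m + x + 1 = 0} = (X ^ 2 ^ m + X + 1 : F[X]).rootSet F := by
    ext x
    simp [mem_rootSet, hsep.ne_zero]
  rw [hroots, ← Nat.card_coe_set_eq, Nat.card_eq_fintype_card,
    card_rootSet_eq_natDegree hsep (IsAlgClosed.splits _), natDegree_X_pow_two_pow_add_X_add_one hm]

theorem stmt_6_general (n : ℕ) (hn3 : 3 < n) :
    Nat.card {x : K // x ^ (2 ^ (3 * n)) + x + 1 = 0 ∧
        x ^ (2 ^ (6 * n)) = x ∧ x ^ (2 ^ (2 * n)) ≠ x ∧ x ^ (2 ^ (3 * n)) ≠ x}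
      = 2 ^ (3 * n) - 2 ^ n := by
  have hn : n ≠ 0 := by omega
  have hroots := ncard_setOf_pow_two_pow_add_add_one_eq_zero (F := K) hn
  have hfinite : {x : K | x ^ 2 ^ n + x + 1 = 0}.Finite :=
    Set.finite_of_ncard_ne_zero (by simp [hroots])
  rw [← Set.coe_ofPred, Nat.card_coe_set_eq, setOf_pow_two_pow_three_mul_eq_sdiff,
    Set.ncard_sdiff (setOf_pow_two_pow_add_add_one_subset (by decide) n) hfinite,
    ncard_setOf_pow_two_pow_add_add_one_eq_zero (by omega), hroots]

/-- The number of roots of `x^{2^{3n}} + x + 1` that have degree 6 over `F_{2^n}`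
is `2^{3n} - 2^n`. -/
theorem stmt_6 (n : ℕ) (hn : n.Prime) (hn3 : 3 < n) :
    Nat.card {x : K // x ^ (2 ^ (3 * n)) + x + 1 = 0 ∧
        x ^ (2 ^ (6 * n)) = x ∧ x ^ (2 ^ (2 * n)) ≠ x ∧ x ^ (2 ^ (3 * n)) ≠ x}
      = 2 ^ (3 * n) - 2 ^ n :=
  stmt_6_general n hn3
end

section
/- Let n > 3 be prime. The number of elements β of F_{2^{6n}} of degree 6 over F_{2^n} satisfying β^{2^{2n}} = 1/β + 1 is 2^{2n} - 2^n - 2. -/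
local notation "K" => AlgebraicClosure (ZMod 2)

/-!
Write `σ` for the `n`-th power of Frobenius. The equation reads `x * (σ² x + 1) = 1`, i.e.
`σ² x = g x` for the Möbius map `g x = 1 + 1 / x`, which has order `3` in characteristic `2`,
so all its `2 ^ (2n) + 1` solutions (the roots of the separable polynomial
`X * (X ^ 2 ^ (2n) + 1) - 1`) are fixed by `σ⁶`. Among them, those fixed by `σ²` are the two
roots of `X * (X + 1) - 1`, and those fixed by `σ³` are the `2 ^ n + 1` roots of
`X ^ 2 ^ n * (X + 1) - 1`; for odd `n` no element is both.
-/

open Polynomial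

theorem eq_iff_mul_add_one_eq_one {R : Type*} [CommRing R] {a b c : R} (h : a * (b + 1) = 1) :
    b = c ↔ a * (c + 1) = 1 :=
  ⟨fun hbc => hbc ▸ h, fun h' => by linear_combination (c + 1) * h - (b + 1) * h'⟩

namespace Polynomial

theorem separable_mul_sub_one {R : Type*} [CommRing R] {a b : R[X]}
    (ha : derivative a = 0) (hb : derivative b = 1) : (a * b - 1).Separable := by
  rw [separable_def']
  refine ⟨-1, b, ?_⟩
  rw [derivative_sub, derivative_mul, ha, hb, derivative_one]
  ring

theorem derivative_X_pow_char_pow {R : Type*} [CommRing R] {p m : ℕ} [CharP R p] (hm : m ≠ 0) :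
    derivative (X ^ p ^ m : R[X]) = 0 := by
  rw [derivative_X_pow, Nat.cast_pow, CharP.cast_eq_zero, zero_pow hm, C_0, zero_mul]

theorem ncard_setOf_isRoot {F : Type*} [Field F] [IsAlgClosed F] {p : F[X]}
    (hp : p.Separable) : {x | p.IsRoot x}.ncard = p.natDegree := by
  have hroots : {x | p.IsRoot x} = p.rootSet F := by
    ext x
    simp [mem_rootSet, hp.ne_zero]
  rw [hroots, Set.ncard_eq_toFinset_card', Set.toFinset_card]
  exact card_rootSet_eq_natDegree hp (IsAlgClosed.splits _)

end Polynomial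

section CharTwo

variable {R : Type*} [CommRing R] [CharP R 2] {x : R}

namespace RingHom

variable (σ : R →+* R)

theorem mul_iterate_two_add_one_eq_one (h : σ x * (x + 1) = 1) : x * (σ^[2] x + 1) = 1 := by
  change x * (σ (σ x) + 1) = 1
  have h' : σ (σ x) * (σ x + 1) = 1 := by simpa using congrArg σ h
  linear_combination (x + 1) * h' - σ (σ x) * h + (x - σ (σ x)) * CharTwo.two_eq_zero (R := R)

theorem iterate_three_eq_self (h : x * (σ x + 1) = 1) : σ^[3] x = x := by
  have h₁ : σ x * (σ (σ x) + 1) = 1 := by simpa using congrArg σ h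
  have h₂ : σ (σ x) * (σ (σ (σ x)) + 1) = 1 := by simpa using congrArg σ h₁
  refine (eq_iff_mul_add_one_eq_one h₂).2 ?_
  linear_combination
    x * h₁ - σ (σ x) * h - h + (x * σ (σ x) + x - 1) * CharTwo.two_eq_zero (R := R)

end RingHom

theorem mul_pow_two_pow_two_mul_add_one_eq_one {n : ℕ} (h : x ^ 2 ^ n * (x + 1) = 1) :
    x * (x ^ 2 ^ (2 * n) + 1) = 1 := by
  have h' := (iterateFrobenius R 2 n).mul_iterate_two_add_one_eq_one h
  rwa [← iterateFrobenius_mul_apply, mul_comm n 2] at h'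

theorem pow_four_eq_self_of_mul_add_one_eq_one (h : x * (x + 1) = 1) : x ^ 4 = x := by
  linear_combination (x ^ 2 - x) * h + (x ^ 2 - x) * CharTwo.two_eq_zero (R := R)

theorem pow_two_pow_two_mul_eq_self_of_mul_add_one_eq_one (h : x * (x + 1) = 1) (k : ℕ) :
    x ^ 2 ^ (2 * k) = x :=
  (iterateFrobenius_mul_apply R 2 2 k x).trans <|
    Function.iterate_fixed (f := iterateFrobenius R 2 2)
      (pow_four_eq_self_of_mul_add_one_eq_one h) k

theorem pow_two_pow_mul_add_one_ne_one_of_odd [Nontrivial R] {n : ℕ} (hn : Odd n)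
    (h : x * (x + 1) = 1) : x ^ 2 ^ n * (x + 1) ≠ 1 := by
  obtain ⟨k, rfl⟩ := hn
  rw [pow_succ, pow_mul, pow_two_pow_two_mul_eq_self_of_mul_add_one_eq_one h]
  intro h'
  apply one_ne_zero (α := R)
  linear_combination -h + (x + 2) * (h' - x * h) + CharTwo.two_eq_zero (R := R)

end CharTwo

section CharTwoField

variable {F : Type*} [Field F] [CharP F 2]

theorem RingHom.map_eq_one_div_add_one_iff (σ : F →+* F) (x : F) :
    σ x = 1 / x + 1 ↔ x * (σ x + 1) = 1 := by
  rcases eq_or_ne x 0 with rfl | hx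
  · simp
  · rw [← CharTwo.add_eq_iff_eq_add, eq_div_iff hx, mul_comm]

theorem RingHom.iterate_six_eq_self_and_eq_one_div_add_one_iff (σ : F →+* F) (x : F) :
    ((σ^[6] x = x ∧ σ^[2] x ≠ x ∧ σ^[3] x ≠ x) ∧ σ^[2] x = 1 / x + 1) ↔
      x * (σ^[2] x + 1) = 1 ∧ x * (x + 1) ≠ 1 ∧ σ x * (x + 1) ≠ 1 := by
  rw [show σ^[2] x = (σ.comp σ) x from rfl, map_eq_one_div_add_one_iff]
  constructor
  · rintro ⟨⟨-, h₂, h₃⟩, h⟩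
    exact ⟨h, mt (eq_iff_mul_add_one_eq_one h).2 h₂,
      mt (eq_iff_mul_add_one_eq_one (by simpa using congrArg σ h)).2 h₃⟩
  · rintro ⟨h, hB, hC⟩
    exact ⟨⟨(σ.comp σ).iterate_three_eq_self h, mt (eq_iff_mul_add_one_eq_one h).1 hB,
      mt (eq_iff_mul_add_one_eq_one (by simpa using congrArg σ h)).1 hC⟩, h⟩

variable [IsAlgClosed F]

theorem ncard_setOf_mul_pow_two_pow_add_one_eq_one {m : ℕ} (hm : m ≠ 0) :
    {x : F | x * (x ^ 2 ^ m + 1) = 1}.ncard = 2 ^ m + 1 := by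
  have hsep : ((X ^ 2 ^ m + 1) * X - 1 : F[X]).Separable :=
    separable_mul_sub_one
      (by rw [derivative_add, derivative_X_pow_char_pow hm, derivative_one, add_zero]) derivative_X
  have hdeg : ((X ^ 2 ^ m + 1) * X - 1 : F[X]).natDegree = 2 ^ m + 1 := by compute_degree!
  rw [← hdeg, ← ncard_setOf_isRoot hsep]
  simp [sub_eq_zero, mul_comm]

theorem ncard_setOf_pow_two_pow_mul_add_one_eq_one {m : ℕ} (hm : m ≠ 0) :
    {x : F | x ^ 2 ^ m * (x + 1) = 1}.ncard = 2 ^ m + 1 := by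
  have hsep : (X ^ 2 ^ m * (X + 1) - 1 : F[X]).Separable :=
    separable_mul_sub_one (derivative_X_pow_char_pow hm) (by simp)
  have hdeg : (X ^ 2 ^ m * (X + 1) - 1 : F[X]).natDegree = 2 ^ m + 1 := by compute_degree!
  rw [← hdeg, ← ncard_setOf_isRoot hsep]
  simp [sub_eq_zero]

theorem ncard_setOf_mul_add_one_eq_one : {x : F | x * (x + 1) = 1}.ncard = 2 := by
  have hder : derivative (X * (X + 1) - 1 : F[X]) = 1 := by
    simp only [derivative_sub, derivative_mul, derivative_add, derivative_X, derivative_one]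
    linear_combination (X : F[X]) * CharTwo.two_eq_zero (R := F[X])
  have hsep : (X * (X + 1) - 1 : F[X]).Separable := by
    rw [separable_def, hder]
    exact isCoprime_one_right
  have hdeg : (X * (X + 1) - 1 : F[X]).natDegree = 2 := by compute_degree!
  rw [← hdeg, ← ncard_setOf_isRoot hsep]
  simp [sub_eq_zero]

end CharTwoField

/-- The number of elements `β` of degree 6 over `F_{2^n}` satisfying
`β^{2^{2n}} = 1/β + 1` is `2^{2n} - 2^n - 2`. -/
theorem stmt_8 (n : ℕ) (hn : n.Prime) (hn3 : 3 < n) :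
    Nat.card {β : K // (β ^ (2 ^ (6 * n)) = β ∧ β ^ (2 ^ (2 * n)) ≠ β ∧ β ^ (2 ^ (3 * n)) ≠ β) ∧
        β ^ (2 ^ (2 * n)) = 1 / β + 1}
      = 2 ^ (2 * n) - 2 ^ n - 2 := by
  set A := {x : K | x * (x ^ 2 ^ (2 * n) + 1) = 1}
  set B := {x : K | x * (x + 1) = 1}
  set C := {x : K | x ^ 2 ^ n * (x + 1) = 1}
  have hsol : {β : K | (β ^ (2 ^ (6 * n)) = β ∧ β ^ (2 ^ (2 * n)) ≠ β ∧
      β ^ (2 ^ (3 * n)) ≠ β) ∧ β ^ (2 ^ (2 * n)) = 1 / β + 1} = A \ (B ∪ C) := by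
    ext x
    have hσ (k : ℕ) : x ^ 2 ^ (k * n) = (iterateFrobenius K 2 n)^[k] x := by
      rw [mul_comm]; exact iterateFrobenius_mul_apply K 2 n k x
    simp only [A, B, C, Set.mem_ofPred_eq, Set.mem_sdiff, Set.mem_union, hσ,
      RingHom.iterate_six_eq_self_and_eq_one_div_add_one_iff, iterateFrobenius_def]
    tauto
  have hBA : B ⊆ A := fun x (hx : x * (x + 1) = 1) =>
    show x * (x ^ 2 ^ (2 * n) + 1) = 1 by rwa [pow_two_pow_two_mul_eq_self_of_mul_add_one_eq_one hx]
  have hCA : C ⊆ A := fun _ => mul_pow_two_pow_two_mul_add_one_eq_one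
  have hBC : Disjoint B C := Set.disjoint_left.2 fun _ =>
    pow_two_pow_mul_add_one_ne_one_of_odd (hn.odd_of_ne_two (by omega))
  have hA : A.ncard = 2 ^ (2 * n) + 1 := ncard_setOf_mul_pow_two_pow_add_one_eq_one (by omega)
  have hB : B.ncard = 2 := ncard_setOf_mul_add_one_eq_one
  have hC : C.ncard = 2 ^ n + 1 := ncard_setOf_pow_two_pow_mul_add_one_eq_one hn.ne_zero
  have hAfin : A.Finite := Set.finite_of_ncard_ne_zero (by rw [hA]; positivity)
  rw [← Set.coe_ofPred, Nat.card_coe_set_eq, hsol,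
    Set.ncard_sdiff' (Set.union_subset hBA hCA) hAfin,
    Set.ncard_union_eq hBC (hAfin.subset hBA) (hAfin.subset hCA), hA, hB, hC]
  omega
end

section
/- Let n be a positive integer and β an element of F_{2^{3n}} with β ≠ 0, 1. Then β^{2^{2n}} = 1/β + 1 if and only if β^{2^n}(β + 1) = 1. Moreover the number of β ∈ F_{2^{3n}} satisfying β^{2^n}(β+1) = 1 is 2^n + 1. -/
local notation "K" => AlgebraicClosure (ZMod 2)

open Polynomial

private lemma two_eq_zeroK : (2 : K) = 0 := by
  have := CharP.cast_eq_zero K 2; simpa using this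

private lemma frobK (n : ℕ) (x y : K) : (x + y) ^ (2 ^ n) = x ^ (2 ^ n) + y ^ (2 ^ n) :=
  add_pow_char_pow x y 2 n

private lemma pow2n (β : K) (n : ℕ) : β ^ (2 ^ (2 * n)) = (β ^ (2 ^ n)) ^ (2 ^ n) := by
  rw [← pow_mul, ← pow_add, two_mul]

private lemma pow3n (β : K) (n : ℕ) :
    β ^ (2 ^ (3 * n)) = ((β ^ (2 ^ n)) ^ (2 ^ n)) ^ (2 ^ n) := by
  rw [← pow_mul, ← pow_mul, ← pow_add, ← pow_add]
  congr 1
  ring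

private lemma aux1 (n : ℕ) (hn : 0 < n) (β : K) (h : β ^ (2 ^ n) * (β + 1) = 1) :
    β ≠ 0 ∧ β ^ (2 ^ (2 * n)) = 1 / β + 1 ∧ β ^ (2 ^ (3 * n)) = β := by
  have h2 := two_eq_zeroK
  have hb0 : β ≠ 0 := by
    rintro rfl
    rw [zero_pow (by positivity), zero_mul] at h
    exact one_ne_zero h.symm
  have ha0 : β ^ (2 ^ n) ≠ 0 := pow_ne_zero _ hb0
  have hB : β ^ (2 ^ n) + 1 = β ^ (2 ^ n) * β := by
    linear_combination (-1 : K) * h + β ^ (2 ^ n) * h2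
  have hA : (β ^ (2 ^ n)) ^ (2 ^ n) * (β ^ (2 ^ n) + 1) = 1 := by
    calc (β ^ (2 ^ n)) ^ (2 ^ n) * (β ^ (2 ^ n) + 1)
        = (β ^ (2 ^ n)) ^ (2 ^ n) * (β + 1) ^ (2 ^ n) := by rw [frobK n β 1, one_pow]
      _ = (β ^ (2 ^ n) * (β + 1)) ^ (2 ^ n) := by rw [mul_pow]
      _ = 1 := by rw [h, one_pow]
  have hA' : (β ^ (2 ^ n)) ^ (2 ^ n) * (β ^ (2 ^ n) * β) = 1 := by rw [← hB]; exact hA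
  have hC : (β ^ (2 ^ n)) ^ (2 ^ n) * β = β + 1 := by
    linear_combination (β + 1) * hA' - (β ^ (2 ^ n)) ^ (2 ^ n) * β * h
  refine ⟨hb0, ?_, ?_⟩
  · rw [pow2n]
    field_simp
    linear_combination hC
  · have hD : ((β ^ (2 ^ n)) ^ (2 ^ n)) ^ (2 ^ n) * β ^ (2 ^ n) = β ^ (2 ^ n) + 1 := by
      calc ((β ^ (2 ^ n)) ^ (2 ^ n)) ^ (2 ^ n) * β ^ (2 ^ n)
          = ((β ^ (2 ^ n)) ^ (2 ^ n) * β) ^ (2 ^ n) := (mul_pow _ _ _).symm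
        _ = (β + 1) ^ (2 ^ n) := by rw [hC]
        _ = β ^ (2 ^ n) + 1 := by rw [frobK, one_pow]
    rw [pow3n]
    apply mul_right_cancel₀ ha0
    rw [hD, hB]
    ring

/-- For `β ∈ F_{2^{3n}}`, `β ≠ 0, 1`, the equation `β^{2^{2n}} = 1/β + 1` is equivalent to
`β^{2^n}(β + 1) = 1`, and the latter has exactly `2^n + 1` solutions in `F_{2^{3n}}`. -/
theorem stmt_10 (n : ℕ) (hn : 0 < n) :
    (∀ β : K, β ^ (2 ^ (3 * n)) = β → β ≠ 0 → β ≠ 1 →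
      (β ^ (2 ^ (2 * n)) = 1 / β + 1 ↔ β ^ (2 ^ n) * (β + 1) = 1)) ∧
    Nat.card {β : K // β ^ (2 ^ (3 * n)) = β ∧ β ^ (2 ^ n) * (β + 1) = 1} = 2 ^ n + 1 := by
  have h2 := two_eq_zeroK
  constructor
  · intro β hfix hb0 hb1
    constructor
    · intro heq
      rw [pow2n] at heq
      have heq' : (β ^ (2 ^ n)) ^ (2 ^ n) * β = β + 1 := by
        field_simp at heq
        linear_combination heq
      have hE : ((β ^ (2 ^ n)) ^ (2 ^ n)) ^ (2 ^ n) * β ^ (2 ^ n) = β ^ (2 ^ n) + 1 := by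
        calc ((β ^ (2 ^ n)) ^ (2 ^ n)) ^ (2 ^ n) * β ^ (2 ^ n)
            = ((β ^ (2 ^ n)) ^ (2 ^ n) * β) ^ (2 ^ n) := (mul_pow _ _ _).symm
          _ = (β + 1) ^ (2 ^ n) := by rw [heq']
          _ = β ^ (2 ^ n) + 1 := by rw [frobK, one_pow]
      rw [← pow3n, hfix] at hE
      linear_combination hE + β ^ (2 ^ n) * h2
    · intro h
      exact (aux1 n hn β h).2.1
  · classical
    set p : Polynomial K := X ^ (2 ^ n + 1) + X ^ (2 ^ n) + 1 with hp
    have hc1 : ((2 ^ n + 1 : ℕ) : K) = 1 := by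
      push_cast
      rw [h2, zero_pow hn.ne', zero_add]
    have hc0 : ((2 ^ n : ℕ) : K) = 0 := by
      push_cast
      rw [h2, zero_pow hn.ne']
    have hder : derivative p = X ^ (2 ^ n) := by
      simp [hp, derivative_X_pow, hc1, hc0]
    have hsep : p.Separable := by
      rw [Polynomial.separable_def, hder]
      exact ⟨1, -(X + 1), by rw [hp]; ring⟩
    have hdeg : p.natDegree = 2 ^ n + 1 := by
      rw [hp]; compute_degree!
    have hne : p ≠ 0 := by
      intro h0
      rw [h0] at hdeg
      simp at hdeg
    have hroots : Multiset.card p.roots = 2 ^ n + 1 := by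
      rw [← hdeg]
      exact Polynomial.splits_iff_card_roots.mp (IsAlgClosed.splits p)
    have hmem : ∀ β : K,
        (β ^ (2 ^ (3 * n)) = β ∧ β ^ (2 ^ n) * (β + 1) = 1) ↔ β ∈ p.roots.toFinset := by
      intro β
      rw [Multiset.mem_toFinset, Polynomial.mem_roots hne, Polynomial.IsRoot.def]
      have heval : p.eval β = β ^ (2 ^ n + 1) + β ^ (2 ^ n) + 1 := by simp [hp]
      rw [heval]
      constructor
      · rintro ⟨-, h⟩
        linear_combination h + h2
      · intro h
        have h' : β ^ (2 ^ n) * (β + 1) = 1 := by linear_combination h - h2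
        exact ⟨(aux1 n hn β h').2.2, h'⟩
    calc Nat.card {β : K // β ^ (2 ^ (3 * n)) = β ∧ β ^ (2 ^ n) * (β + 1) = 1}
        = Nat.card {β : K // β ∈ p.roots.toFinset} :=
          Nat.card_congr (Equiv.subtypeEquivRight hmem)
      _ = p.roots.toFinset.card := by
          rw [Nat.card_eq_fintype_card, Fintype.card_coe]
      _ = Multiset.card p.roots :=
          Multiset.toFinset_card_eq_card_iff_nodup.mpr (Polynomial.nodup_roots hsep)
      _ = 2 ^ n + 1 := hroots
end

section
/- Let B = [[1,1],[1,0]] over F_{2^n} and let α be an element with α^{2^{2n}} = B(α) = 1/α + 1, where α has degree 6 over F_{2^n}. If P = [[c,d],[0,1]] with c ∈ F_{2^n}*, d ∈ F_{2^n} is such that P(α) = cα + d also satisfies x^{2^{2n}} = 1/x + 1, then c = 1 and d = 0. -/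
local notation "K" => AlgebraicClosure (ZMod 2)

/-- If `α` has degree 6 over `F_{2^n}` and satisfies `α^{2^{2n}} = 1/α + 1`, and
`cα + d` (with `c ∈ F_{2^n}*`, `d ∈ F_{2^n}`) also satisfies `x^{2^{2n}} = 1/x + 1`,
then `c = 1` and `d = 0`. -/
theorem stmt_13 (n : ℕ) (hn : n.Prime) (hn3 : 3 < n) (α : K)
    (hα : α ^ (2 ^ (6 * n)) = α ∧ α ^ (2 ^ (2 * n)) ≠ α ∧ α ^ (2 ^ (3 * n)) ≠ α)
    (h : α ^ (2 ^ (2 * n)) = 1 / α + 1)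
    (c d : K) (hc : c ^ (2 ^ n) = c) (hd : d ^ (2 ^ n) = d) (hc0 : c ≠ 0)
    (hP : (c * α + d) ^ (2 ^ (2 * n)) = 1 / (c * α + d) + 1) :
    c = 1 ∧ d = 0 := by
  obtain ⟨h6, h2ne, -⟩ := hα
  set φ : K →+* K := iterateFrobenius K 2 (2 * n) with hφdef
  have hφ : ∀ x : K, φ x = x ^ 2 ^ (2 * n) := iterateFrobenius_def 2 (2 * n)
  -- c, d are fixed by φ
  have hc2 : φ c = c := by
    rw [hφ, two_mul, pow_add, pow_mul, hc, hc]
  have hd2 : φ d = d := by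
    rw [hφ, two_mul, pow_add, pow_mul, hd, hd]
  set β := α ^ 2 ^ (2 * n) with hβ
  set γ := β ^ 2 ^ (2 * n) with hγ
  have hφα : φ α = β := hφ α
  have hφβ : φ β = γ := hφ β
  -- six-step periodicity: γ ^ q2 = α
  have h6' : φ γ = α := by
    rw [hφ, hγ, hβ, ← pow_mul, ← pow_mul, ← pow_add, ← pow_add]
    have : 2 * n + (2 * n + 2 * n) = 6 * n := by ring
    rw [this, h6]
  -- nonzeroness
  have hα0 : α ≠ 0 := by
    intro h0
    apply h2ne
    rw [hβ, h0, zero_pow (by positivity)]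
  have hcd0 : c * α + d ≠ 0 := by
    intro h0
    apply h2ne
    have h1 : φ (c * α + d) = 0 := by rw [h0, map_zero]
    rw [map_add, map_mul, hc2, hd2, hφα] at h1
    have : c * (β - α) = 0 := by linear_combination h1 - h0
    rcases mul_eq_zero.mp this with h' | h'
    · exact absurd h' hc0
    · exact sub_eq_zero.mp h'
  -- the key quadratic relation satisfied by α
  have hexp : (c * α + d) ^ 2 ^ (2 * n) = c * β + d := by
    have := hφ (c * α + d)
    rw [map_add, map_mul, hc2, hd2, hφα] at this
    rw [← this]
  rw [hexp, h] at hP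
  have E1 : c * (c + d + 1) * α ^ 2 + (c ^ 2 + (c + d + 1) * d + 1) * α + c * d = 0 := by
    have h2 : (2 : K) = 0 := by
      have := CharP.cast_eq_zero K 2
      exact_mod_cast this
    field_simp at hP
    linear_combination hP + (c * α ^ 2 + (d + 1) * α) * h2
  -- transport via Frobenius to β and γ
  have E2 : c * (c + d + 1) * β ^ 2 + (c ^ 2 + (c + d + 1) * d + 1) * β + c * d = 0 := by
    have := congrArg φ E1
    simpa only [map_add, map_mul, map_pow, map_one, map_zero, hc2, hd2, hφα] using this
  have E3 : c * (c + d + 1) * γ ^ 2 + (c ^ 2 + (c + d + 1) * d + 1) * γ + c * d = 0 := by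
    have := congrArg φ E2
    simpa only [map_add, map_mul, map_pow, map_one, map_zero, hc2, hd2, hφβ] using this
  -- α, β, γ are pairwise distinct
  have hαβ : α ≠ β := fun h' => h2ne h'.symm
  have hαγ : α ≠ γ := by
    intro h'
    apply hαβ
    have := congrArg φ h'
    rw [hφα, h6'] at this
    exact this.symm
  have hβγ : β ≠ γ := by
    intro h'
    apply hαβ
    have := congrArg φ h'
    rw [hφβ, h6'] at this
    -- this : γ = α
    rw [← this, h']
  -- from three distinct roots of a quadratic, all coefficients vanish
  have hA : c * (c + d + 1) = 0 := by
    have k1 : (c * (c + d + 1) * (α + β) + (c ^ 2 + (c + d + 1) * d + 1)) * (α - β) = 0 := by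
      linear_combination E1 - E2
    have k2 : (c * (c + d + 1) * (β + γ) + (c ^ 2 + (c + d + 1) * d + 1)) * (β - γ) = 0 := by
      linear_combination E2 - E3
    have k1' := (mul_eq_zero.mp k1).resolve_right (sub_ne_zero.mpr hαβ)
    have k2' := (mul_eq_zero.mp k2).resolve_right (sub_ne_zero.mpr hβγ)
    have k3 : c * (c + d + 1) * (α - γ) = 0 := by linear_combination k1' - k2'
    exact (mul_eq_zero.mp k3).resolve_right (sub_ne_zero.mpr hαγ)
  have hB : c ^ 2 + (c + d + 1) * d + 1 = 0 := by
    have k1 : (c ^ 2 + (c + d + 1) * d + 1) * (α - β) = 0 := by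
      linear_combination E1 - E2 - (α ^ 2 - β ^ 2) * hA
    exact (mul_eq_zero.mp k1).resolve_right (sub_ne_zero.mpr hαβ)
  have hC : c * d = 0 := by linear_combination E1 - α ^ 2 * hA - α * hB
  have hd0 : d = 0 := (mul_eq_zero.mp hC).resolve_left hc0
  have hsum : c + d + 1 = 0 := by
    rcases mul_eq_zero.mp hA with h' | h'
    · exact absurd h' hc0
    · exact h'
  have h2 : (2 : K) = 0 := by
    have := CharP.cast_eq_zero K 2
    exact_mod_cast this
  refine ⟨?_, hd0⟩
  linear_combination hsum - hd0 - h2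
end

section
/- Let n > 3 be a prime and α an element of degree 6 over F_{2^n} satisfying α^{2^n} = a/α + b with a, b ∈ F_{2^n}, a ≠ 0. Then this leads to a contradiction: either b = 0 (forcing α ∈ F_{2^{2n}}) or a = b² (forcing α/b ∈ F_{2^{3n}}). Hence no element of degree 6 over F_{2^n} satisfies α^{2^n} = a/α + b. -/
local notation "K" => AlgebraicClosure (ZMod 2)

set_option maxHeartbeats 1000000 in
/-- Auxiliary algebraic lemma: six Möbius-type recurrence steps over a field of
characteristic two force `x2 = x0` or `x3 = x0`. -/
lemma stmt_18_aux {F : Type*} [Field F] (h2 : (2 : F) = 0)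
    (a b x0 x1 x2 x3 x4 x5 : F) (hx0 : x0 ≠ 0) (hx1 : x1 ≠ 0)
    (e0 : x1 * x0 = b * x0 + a) (e1 : x2 * x1 = b * x1 + a)
    (e2 : x3 * x2 = b * x2 + a) (e3 : x4 * x3 = b * x3 + a)
    (e4 : x5 * x4 = b * x4 + a) (e5 : x0 * x5 = b * x5 + a)
    (ha0 : a ≠ 0) : x2 = x0 ∨ x3 = x0 := by
  have f2 : x2 * (b * x0 + a) = b * (b * x0 + a) + a * x0 := by
    linear_combination x0 * e1 + (b - x2) * e0
  have f3 : x3 * (b * (b * x0 + a) + a * x0) =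
      b * (b * (b * x0 + a) + a * x0) + a * (b * x0 + a) := by
    linear_combination (b * x0 + a) * e2 + (b - x3) * f2
  have f4 : x4 * (b * (b * (b * x0 + a) + a * x0) + a * (b * x0 + a)) =
      b * (b * (b * (b * x0 + a) + a * x0) + a * (b * x0 + a)) + a * (b * (b * x0 + a) + a * x0) := by
    linear_combination (b * (b * x0 + a) + a * x0) * e3 + (b - x4) * f3
  have f5 : x5 * (b * (b * (b * (b * x0 + a) + a * x0) + a * (b * x0 + a)) + a * (b * (b * x0 + a) + a * x0)) =
      b * (b * (b * (b * (b * x0 + a) + a * x0) + a * (b * x0 + a)) + a * (b * (b * x0 + a) + a * x0)) +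
        a * (b * (b * (b * x0 + a) + a * x0) + a * (b * x0 + a)) := by
    linear_combination (b * (b * (b * x0 + a) + a * x0) + a * (b * x0 + a)) * e4 + (b - x5) * f4
  have f6 : x0 * (b * (b * (b * (b * (b * x0 + a) + a * x0) + a * (b * x0 + a)) + a * (b * (b * x0 + a) + a * x0)) +
        a * (b * (b * (b * x0 + a) + a * x0) + a * (b * x0 + a))) =
      b * (b * (b * (b * (b * (b * x0 + a) + a * x0) + a * (b * x0 + a)) + a * (b * (b * x0 + a) + a * x0)) +
          a * (b * (b * (b * x0 + a) + a * x0) + a * (b * x0 + a))) +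
        a * (b * (b * (b * (b * x0 + a) + a * x0) + a * (b * x0 + a)) + a * (b * (b * x0 + a) + a * x0)) := by
    linear_combination (b * (b * (b * (b * x0 + a) + a * x0) + a * (b * x0 + a)) + a * (b * (b * x0 + a) + a * x0)) * e5 + (b - x0) * f5
  have key : b * (b ^ 2 + a) ^ 2 * (x0 ^ 2 + b * x0 + a) = 0 := by
    linear_combination f6 +
      (b ^ 6 * x0 - a * b ^ 3 * x0 ^ 2 + 3 * a * b ^ 4 * x0 + a * b ^ 5 - a ^ 2 * b * x0 ^ 2 +
        2 * a ^ 2 * b ^ 2 * x0 + 3 * a ^ 2 * b ^ 3 + 2 * a ^ 3 * b) * h2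
  rcases mul_eq_zero.mp key with hk | hc
  · rcases mul_eq_zero.mp hk with hb0 | hsq
    · -- case b = 0 : x2 = x0
      left
      have hxx : x2 * x1 = x0 * x1 := by
        linear_combination e1 - e0 + (x1 - x0) * hb0
      exact mul_right_cancel₀ hx1 hxx
    · -- case a = b² : x3 = x0
      right
      have hab : b ^ 2 + a = 0 := pow_eq_zero_iff (n := 2) (by norm_num) |>.mp hsq
      have hb0 : b ≠ 0 := by
        intro hb0
        apply ha0
        rw [hb0] at hab
        simpa using hab
      have hxx : x3 * b ^ 3 = x0 * b ^ 3 := by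
        linear_combination -f3 + (x0 * x3 + b * x3 - 2 * b * x0 - a) * hab
      exact mul_right_cancel₀ (pow_ne_zero 3 hb0) hxx
  · -- case x0² + b·x0 + a = 0 : x2 = x0
    left
    have h10 : x1 = x0 := by
      have hxx : x1 * x0 = x0 * x0 := by
        linear_combination e0 + hc - x0 ^ 2 * h2
      exact mul_right_cancel₀ hx0 hxx
    rw [h10] at e1 e0
    have hxx : x2 * x0 = x0 * x0 := by linear_combination e1 - e0
    exact mul_right_cancel₀ hx0 hxx

set_option maxHeartbeats 1000000 in
/-- No element `α` of degree 6 over `F_{2^n}` satisfies `α^{2^n} = a/α + b` with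
`a, b ∈ F_{2^n}`, `a ≠ 0`. -/
theorem stmt_18 (n : ℕ) (hn : n.Prime) (hn3 : 3 < n) (α : K)
    (hα : α ^ (2 ^ (6 * n)) = α ∧ α ^ (2 ^ (2 * n)) ≠ α ∧ α ^ (2 ^ (3 * n)) ≠ α)
    (a b : K) (ha : a ^ (2 ^ n) = a) (hb : b ^ (2 ^ n) = b) (ha0 : a ≠ 0) :
    α ^ (2 ^ n) ≠ a / α + b := by
  intro heq
  obtain ⟨h6, h2', h3'⟩ := hα
  haveI : CharP K 2 := inferInstance
  haveI : Fact (Nat.Prime 2) := ⟨Nat.prime_two⟩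
  have h2 : (2 : K) = 0 := CharTwo.two_eq_zero
  have hα0 : α ≠ 0 := by
    intro h0
    apply h2'
    rw [h0, zero_pow (by positivity)]
  set q := 2 ^ n with hq
  -- identifying iterated Frobenius powers
  have hq2 : q * q = 2 ^ (2 * n) := by
    rw [hq, ← pow_add, two_mul]
  have hq3 : q * (q * q) = 2 ^ (3 * n) := by
    rw [hq, ← pow_add, ← pow_add]; congr 1; ring
  have hq6 : q * (q * (q * (q * (q * q)))) = 2 ^ (6 * n) := by
    rw [hq, ← pow_add, ← pow_add, ← pow_add, ← pow_add, ← pow_add]; congr 1; ring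
  have h6' : ((((((α ^ q) ^ q) ^ q) ^ q) ^ q) ^ q) = α := by
    rw [← pow_mul, ← pow_mul, ← pow_mul, ← pow_mul, ← pow_mul, hq6]
    exact h6
  have hne2 : (α ^ q) ^ q ≠ α := by
    rw [← pow_mul, hq2]; exact h2'
  have hne3 : ((α ^ q) ^ q) ^ q ≠ α := by
    rw [← pow_mul, ← pow_mul, hq3]; exact h3'
  have frob : ∀ x y : K, (x + y) ^ q = x ^ q + y ^ q := fun x y =>
    add_pow_char_pow x y 2 n
  have e0 : α ^ q * α = b * α + a := by
    rw [heq, add_mul, div_mul_cancel₀ a hα0, add_comm]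
  have step : ∀ x : K, (x ^ q) * x = b * x + a → ((x ^ q) ^ q) * (x ^ q) = b * (x ^ q) + a := by
    intro x hx
    have h' := congrArg (· ^ q) hx
    simp only [mul_pow] at h'
    rw [frob (b * x) a, mul_pow, hb, ha] at h'
    exact h'
  have e1 := step α e0
  have e2 := step (α ^ q) e1
  have e3 := step ((α ^ q) ^ q) e2
  have e4 := step (((α ^ q) ^ q) ^ q) e3
  have e5' := step ((((α ^ q) ^ q) ^ q) ^ q) e4
  rw [h6'] at e5'
  have hx10 : α ^ q ≠ 0 := pow_ne_zero _ hα0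
  rcases stmt_18_aux h2 a b α (α ^ q) ((α ^ q) ^ q) (((α ^ q) ^ q) ^ q)
      ((((α ^ q) ^ q) ^ q) ^ q) (((((α ^ q) ^ q) ^ q) ^ q) ^ q)
      hα0 hx10 e0 e1 e2 e3 e4 e5' ha0 with h | h
  · exact hne2 h
  · exact hne3 h
end

section
/- Let n > 3 be prime. Then 6n divides 2^{3n} + 2^{2n} + 3·2^n + 12n − 18. -/
lemma aux_cop_19 (n : ℕ) (hn : n.Prime) (hn3 : 3 < n) : Nat.Coprime 6 n := by
  have hnd : ¬ n ∣ 6 := by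
    intro h
    have h6 := Nat.le_of_dvd (by norm_num) h
    interval_cases n <;> revert h hn <;> decide
  exact (hn.coprime_iff_not_dvd.mpr hnd).symm


/-- For `n > 3` prime, `6n` divides `2^{3n} + 2^{2n} + 3·2^n + 12n - 18`. -/
theorem stmt_19 (n : ℕ) (hn : n.Prime) (hn3 : 3 < n) :
    6 * n ∣ 2 ^ (3 * n) + 2 ^ (2 * n) + 3 * 2 ^ n + 12 * n - 18 := by
  haveI := Fact.mk hn
  have hodd : Odd n := hn.odd_of_ne_two (by omega)
  have h18 : 18 ≤ 2 ^ (3 * n) + 2 ^ (2 * n) + 3 * 2 ^ n + 12 * n :=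
    le_trans (by omega : 18 ≤ 12 * n) (Nat.le_add_left _ _)
  obtain ⟨E, hE⟩ : ∃ E : ℤ, E = 2 ^ (3 * n) + 2 ^ (2 * n) + 3 * 2 ^ n + 12 * (n : ℤ) - 18 :=
    ⟨_, rfl⟩
  -- divisibility by n
  have hnE : (n : ℤ) ∣ E := by
    have := (ZMod.intCast_zmod_eq_zero_iff_dvd E n).mp ?_
    · exact this
    have key : (2 : ZMod n) ^ n = 2 := ZMod.pow_card 2
    have h3n : (2 : ZMod n) ^ (3 * n) = 8 := by
      rw [mul_comm, pow_mul, key]; norm_num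
    have h2n : (2 : ZMod n) ^ (2 * n) = 4 := by
      rw [mul_comm, pow_mul, key]; norm_num
    push_cast [hE]
    rw [h3n, h2n, key, ZMod.natCast_self]
    ring
  -- divisibility by 2
  have h2E : (2 : ℤ) ∣ E := by
    have h1 : (2 : ℤ) ∣ 2 ^ (3 * n) := dvd_pow_self 2 (by omega)
    have h2 : (2 : ℤ) ∣ 2 ^ (2 * n) := dvd_pow_self 2 (by omega)
    have h3 : (2 : ℤ) ∣ 2 ^ n := dvd_pow_self 2 (by omega)
    obtain ⟨a, ha⟩ := h1; obtain ⟨b, hb⟩ := h2; obtain ⟨c, hc⟩ := h3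
    exact ⟨a + b + 3 * c + 6 * n - 9, by rw [hE, ha, hb, hc]; ring⟩
  -- divisibility by 3
  have h3E : (3 : ℤ) ∣ E := by
    have hm : (2 : ℤ) ≡ -1 [ZMOD 3] := by decide
    have h3n : ((2 : ℤ)) ^ (3 * n) ≡ -1 [ZMOD 3] := by
      calc (2 : ℤ) ^ (3 * n) ≡ (-1) ^ (3 * n) [ZMOD 3] := hm.pow _
        _ = -1 := Odd.neg_one_pow ((Nat.odd_mul).mpr ⟨⟨1, rfl⟩, hodd⟩)
    have h2n : ((2 : ℤ)) ^ (2 * n) ≡ 1 [ZMOD 3] := by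
      calc (2 : ℤ) ^ (2 * n) ≡ (-1) ^ (2 * n) [ZMOD 3] := hm.pow _
        _ = 1 := by rw [pow_mul]; norm_num
    have hn2 : ((2 : ℤ)) ^ n ≡ -1 [ZMOD 3] := by
      calc (2 : ℤ) ^ n ≡ (-1) ^ n [ZMOD 3] := hm.pow _
        _ = -1 := Odd.neg_one_pow hodd
    have hmod : E ≡ 0 [ZMOD 3] := by
      calc E ≡ -1 + 1 + 3 * (-1) + 12 * (n : ℤ) - 18 [ZMOD 3] := by
            rw [hE]
            exact ((((h3n.add h2n).add ((Int.ModEq.refl 3).mul hn2)).add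
              (Int.ModEq.refl _)).sub (Int.ModEq.refl 18))
        _ ≡ 0 [ZMOD 3] := (Int.modEq_zero_iff_dvd).mpr ⟨4 * n - 7, by ring⟩
    exact (Int.modEq_zero_iff_dvd).mp hmod
  -- combine
  have h6E : (6 : ℤ) ∣ E := by
    have : IsCoprime (2 : ℤ) 3 := by
      rw [Int.isCoprime_iff_gcd_eq_one]; decide
    simpa using this.mul_dvd h2E h3E
  have hcop : IsCoprime (6 : ℤ) (n : ℤ) := by
    rw [Int.isCoprime_iff_gcd_eq_one]
    have : Nat.Coprime 6 n := aux_cop_19 n hn hn3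
    simpa [Int.gcd] using this
  have hfinal : (6 * (n : ℤ)) ∣ E := hcop.mul_dvd h6E hnE
  zify [h18]
  rw [← hE]
  exact hfinal
end
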